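/- Let φ : ℝ → ℝ be twice continuously differentiable, convex and non-decreasing. Then for all real u and h ≤ u (and indeed all real h, u), (φ(u) - φ(h))₊ - φ'(h)·(u - h)₊ = ∫_ℝ (u - k)₊ · χ_{[k > h]} · φ''(k) dk, where x₊ = max(x, 0). -/

import Mathlib

/-!
The integrand is `(u - k) φ''(k)` on `(h, u]` and vanishes elsewhere. For `u ≤ h` both sides are
therefore zero, by monotonicity of `φ`; for `h < u` the identity is Taylor's formula for `φ` at `h`
with integral remainder.
-/

open MeasureTheory Set

theorem integral_sub_mul_deriv_deriv_eq {f : ℝ → ℝ} (hf : ContDiff ℝ 2 f) (a b : ℝ) :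
    ∫ k in a..b, (b - k) * deriv (deriv f) k = f b - f a - deriv f a * (b - a) := by
  have hf' : ContDiff ℝ 1 (deriv f) := (contDiff_succ_iff_deriv (n := 1)).mp hf |>.2.2
  -- `k ↦ (b - k) f'(k) + f(k)` is an antiderivative of the integrand.
  have hderiv : ∀ k ∈ uIcc a b, HasDerivAt (fun k => (b - k) * deriv f k + f k)
      ((b - k) * deriv (deriv f) k) k := by
    intro k _
    refine ((((hasDerivAt_id' k).const_sub b).mul
      (hf'.differentiable one_ne_zero k).hasDerivAt).add
      (hf.differentiable two_ne_zero k).hasDerivAt).congr_deriv ?_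
    ring
  have hcont : Continuous fun k => (b - k) * deriv (deriv f) k :=
    (continuous_const.sub continuous_id).mul (hf'.continuous_deriv le_rfl)
  rw [intervalIntegral.integral_eq_sub_of_hasDerivAt hderiv (hcont.intervalIntegrable a b)]
  simp only [sub_self, zero_mul, zero_add]
  ring

theorem max_sub_mul_indicator_eq_indicator_Ioc (g : ℝ → ℝ) (h u : ℝ) :
    (fun k => max (u - k) 0 * {k : ℝ | h < k}.indicator g k)
      = (Ioc h u).indicator fun k => (u - k) * g k := by
  ext k
  by_cases hk : h < k
  · by_cases hku : k ≤ u
    · simp [indicator, hk, hku]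
    · simp [indicator, hk, hku, (not_le.mp hku).le]
  · simp [indicator, hk]

theorem stmt_2_general (φ : ℝ → ℝ) (hφ : ContDiff ℝ 2 φ)
    (hmono : Monotone φ) (u h : ℝ) :
    max (φ u - φ h) 0 - deriv φ h * max (u - h) 0
      = ∫ k : ℝ, max (u - k) 0 * Set.indicator {k : ℝ | h < k}
          (fun k => deriv (deriv φ) k) k := by
  rw [max_sub_mul_indicator_eq_indicator_Ioc, integral_indicator measurableSet_Ioc]
  rcases le_or_gt u h with hu | hu
  · rw [Ioc_eq_empty hu.not_gt, Measure.restrict_empty, integral_zero_measure,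
      max_eq_right (sub_nonpos.mpr (hmono hu)), max_eq_right (sub_nonpos.mpr hu)]
    ring
  · rw [← intervalIntegral.integral_of_le hu.le, integral_sub_mul_deriv_deriv_eq hφ,
      max_eq_left (sub_nonneg.mpr (hmono hu.le)), max_eq_left (sub_nonneg.mpr hu.le)]

theorem stmt_2 (φ : ℝ → ℝ) (hφ : ContDiff ℝ 2 φ)
    (hconv : ConvexOn ℝ Set.univ φ) (hmono : Monotone φ) (u h : ℝ) :
    max (φ u - φ h) 0 - deriv φ h * max (u - h) 0
      = ∫ k : ℝ, max (u - k) 0 * Set.indicator {k : ℝ | h < k}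
          (fun k => deriv (deriv φ) k) k :=
  stmt_2_general φ hφ hmono u h
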